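/- If ∀X.A ≡ B ⇒ C in Polymorphic System I, then there exists a type C' such that C ≡ ∀X.C' and A ≡ B ⇒ C'. -/

import Mathlib

/-- Types of Polymorphic System I: variables, arrows, conjunctions, universal types. -/
inductive Ty : Type
  | var : ℕ → Ty
  | arr : Ty → Ty → Ty
  | conj : Ty → Ty → Ty
  | all : ℕ → Ty → Ty
deriving DecidableEq

/-- Free type variables. -/
def ftv : Ty → Finset ℕ
  | .var X => {X}
  | .arr A B => ftv A ∪ ftv B
  | .conj A B => ftv A ∪ ftv B
  | .all X A => ftv A \ {X}

/-- Type isomorphism ≡: the smallest congruence generated by the six isomorphisms of PSI. -/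
inductive TyEquiv : Ty → Ty → Prop
  | comm (A B) : TyEquiv (.conj A B) (.conj B A)
  | assoc (A B C) : TyEquiv (.conj A (.conj B C)) (.conj (.conj A B) C)
  | distArr (A B C) : TyEquiv (.arr A (.conj B C)) (.conj (.arr A B) (.arr A C))
  | curry (A B C) : TyEquiv (.arr (.conj A B) C) (.arr A (.arr B C))
  | allArr (X A B) : X ∉ ftv A → TyEquiv (.all X (.arr A B)) (.arr A (.all X B))
  | allConj (X A B) : TyEquiv (.all X (.conj A B)) (.conj (.all X A) (.all X B))
  | refl (A) : TyEquiv A A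
  | symm {A B} : TyEquiv A B → TyEquiv B A
  | trans {A B C} : TyEquiv A B → TyEquiv B C → TyEquiv A C
  | congArr {A A' B B'} : TyEquiv A A' → TyEquiv B B' → TyEquiv (.arr A B) (.arr A' B')
  | congConj {A A' B B'} : TyEquiv A A' → TyEquiv B B' → TyEquiv (.conj A B) (.conj A' B')
  | congAll (X) {A B} : TyEquiv A B → TyEquiv (.all X A) (.all X B)

/-- Auxiliary for PF: turn ∀X⃗.(C ⇒ Y) into ∀X⃗.((A ∧ C) ⇒ Y). -/
def pushArr (A : Ty) : Ty → Ty
  | .all X t => .all X (pushArr A t)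
  | .arr C Y => .arr (.conj A C) Y
  | t => t

/-- Multiset of prime factors of a type. -/
def PF : Ty → Multiset Ty
  | .var X => {.var X}
  | .arr A B => (PF B).map (pushArr A)
  | .conj A B => PF A + PF B
  | .all X A => (PF A).map (.all X)

/-- Being of the form ∀X₁...∀Xₙ.(B ⇒ Y) with Y a type variable. -/
inductive IsPrimeForm : Ty → Prop
  | base (B Y) : IsPrimeForm (.arr B (.var Y))
  | step (X) {t} : IsPrimeForm t → IsPrimeForm (.all X t)

/-- Conjunction of a (nonempty) list of types, A₁ ∧ ... ∧ Aₙ. -/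
def conjList : List Ty → Ty
  | [] => .var 0
  | [A] => A
  | A :: l => .conj A (conjList l)

/-- ∀X₁...∀Xₙ.A -/
def allList (l : List ℕ) (A : Ty) : Ty := l.foldr .all A

/-- Substitution of a type for a type variable in a type. -/
def substTy (X : ℕ) (B : Ty) : Ty → Ty
  | .var Y => if Y = X then B else .var Y
  | .arr C D => .arr (substTy X B C) (substTy X B D)
  | .conj C D => .conj (substTy X B C) (substTy X B D)
  | .all Y C => if Y = X then .all Y C else .all Y (substTy X B C)

/-- Terms of PSI (Church style). -/
inductive Tm : Type
  | var : ℕ → Ty → Tm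
  | lam : ℕ → Ty → Tm → Tm
  | app : Tm → Tm → Tm
  | pair : Tm → Tm → Tm
  | proj : Ty → Tm → Tm
  | tlam : ℕ → Tm → Tm
  | tapp : Tm → Ty → Tm

/-- Substitution of a term for a term variable. -/
def substTm (x : ℕ) (s : Tm) : Tm → Tm
  | .var y A => if y = x then s else .var y A
  | .lam y A r => if y = x then .lam y A r else .lam y A (substTm x s r)
  | .app r t => .app (substTm x s r) (substTm x s t)
  | .pair r t => .pair (substTm x s r) (substTm x s t)
  | .proj A r => .proj A (substTm x s r)
  | .tlam X r => .tlam X (substTm x s r)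
  | .tapp r A => .tapp (substTm x s r) A

/-- Substitution of a type for a type variable in a term. -/
def substTyTm (X : ℕ) (B : Ty) : Tm → Tm
  | .var y A => .var y (substTy X B A)
  | .lam y A r => .lam y (substTy X B A) (substTyTm X B r)
  | .app r t => .app (substTyTm X B r) (substTyTm X B t)
  | .pair r t => .pair (substTyTm X B r) (substTyTm X B t)
  | .proj A r => .proj (substTy X B A) (substTyTm X B r)
  | .tlam Y r => if Y = X then .tlam Y r else .tlam Y (substTyTm X B r)
  | .tapp r A => .tapp (substTyTm X B r) (substTy X B A)

abbrev Ctx := List (ℕ × Ty)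

def ftvCtx (Γ : Ctx) : Finset ℕ := Γ.foldr (fun p s => ftv p.2 ∪ s) ∅

def substCtx (X : ℕ) (B : Ty) (Γ : Ctx) : Ctx := Γ.map (fun p => (p.1, substTy X B p.2))

/-- Typing relation of PSI. -/
inductive Typing : Ctx → Tm → Ty → Prop
  | ax {Γ x A} : (x, A) ∈ Γ → Typing Γ (.var x A) A
  | equiv {Γ r A B} : Typing Γ r A → TyEquiv A B → Typing Γ r B
  | arrI {Γ x A r B} : Typing ((x, A) :: Γ) r B → Typing Γ (.lam x A r) (.arr A B)
  | arrE {Γ r s A B} : Typing Γ r (.arr A B) → Typing Γ s A → Typing Γ (.app r s) B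
  | conjI {Γ r s A B} : Typing Γ r A → Typing Γ s B → Typing Γ (.pair r s) (.conj A B)
  | conjE {Γ r A B} : Typing Γ r (.conj A B) → Typing Γ (.proj A r) A
  | allI {Γ r X A} : Typing Γ r A → X ∉ ftvCtx Γ → Typing Γ (.tlam X r) (.all X A)
  | allE {Γ r X A B} : Typing Γ r (.all X A) → Typing Γ (.tapp r B) (substTy X B A)

/-- "r has type A" (context is redundant in Church style). -/
def HasTy (r : Tm) (A : Ty) : Prop := ∃ Γ, Typing Γ r A

/-- One-step structural equivalence ⇄ (symmetric, closed under all term contexts). -/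
inductive StEq : Tm → Tm → Prop
  | comm (r s) : StEq (.pair r s) (.pair s r)
  | assoc (r s t) : StEq (.pair r (.pair s t)) (.pair (.pair r s) t)
  | distLam (x A r s) : StEq (.lam x A (.pair r s)) (.pair (.lam x A r) (.lam x A s))
  | distApp (r s t) : StEq (.app (.pair r s) t) (.pair (.app r t) (.app s t))
  | curry (r s t) : StEq (.app r (.pair s t)) (.app (.app r s) t)
  | pcommII (X x A r) : X ∉ ftv A → StEq (.tlam X (.lam x A r)) (.lam x A (.tlam X r))
  | pcommEI (X x A B r) : X ∉ ftv A → StEq (.tapp (.lam x A r) B) (.lam x A (.tapp r B))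
  | pdistII (X r s) : StEq (.tlam X (.pair r s)) (.pair (.tlam X r) (.tlam X s))
  | pdistEI (r s A) : StEq (.tapp (.pair r s) A) (.pair (.tapp r A) (.tapp s A))
  | pdistIE (X A r) : StEq (.proj (.all X A) (.tlam X r)) (.tlam X (.proj A r))
  | pdistEE (X A B C r) : HasTy r (.all X (.conj B C)) →
      StEq (.tapp (.proj (.all X B) r) A) (.proj (substTy X A B) (.tapp r A))
  | symm {r s} : StEq r s → StEq s r
  | congLam (x A) {r s} : StEq r s → StEq (.lam x A r) (.lam x A s)
  | congAppL (t) {r s} : StEq r s → StEq (.app r t) (.app s t)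
  | congAppR (t) {r s} : StEq r s → StEq (.app t r) (.app t s)
  | congPairL (t) {r s} : StEq r s → StEq (.pair r t) (.pair s t)
  | congPairR (t) {r s} : StEq r s → StEq (.pair t r) (.pair t s)
  | congProj (A) {r s} : StEq r s → StEq (.proj A r) (.proj A s)
  | congTlam (X) {r s} : StEq r s → StEq (.tlam X r) (.tlam X s)
  | congTapp (A) {r s} : StEq r s → StEq (.tapp r A) (.tapp s A)

/-- One-step reduction ↪ (typed β-reductions and typed projection, closed under contexts). -/
inductive Red : Tm → Tm → Prop
  | beta (x A r s) : HasTy s A → Red (.app (.lam x A r) s) (substTm x s r)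
  | tbeta (X A r) : Red (.tapp (.tlam X r) A) (substTyTm X A r)
  | pi (A r s) : HasTy r A → Red (.proj A (.pair r s)) r
  | congLam (x A) {r s} : Red r s → Red (.lam x A r) (.lam x A s)
  | congAppL (t) {r s} : Red r s → Red (.app r t) (.app s t)
  | congAppR (t) {r s} : Red r s → Red (.app t r) (.app t s)
  | congPairL (t) {r s} : Red r s → Red (.pair r t) (.pair s t)
  | congPairR (t) {r s} : Red r s → Red (.pair t r) (.pair t s)
  | congProj (A) {r s} : Red r s → Red (.proj A r) (.proj A s)
  | congTlam (X) {r s} : Red r s → Red (.tlam X r) (.tlam X s)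
  | congTapp (A) {r s} : Red r s → Red (.tapp r A) (.tapp s A)

/-- ⇄*: reflexive-transitive closure of ⇄. -/
def SeqStar : Tm → Tm → Prop := Relation.ReflTransGen StEq

/-- The operational semantics → = ⇄* ∘ ↪ ∘ ⇄*. -/
def Step (r s : Tm) : Prop := ∃ r' s', SeqStar r r' ∧ Red r' s' ∧ SeqStar s' s

/-- Strong normalisation with respect to →. -/
def SN (r : Tm) : Prop := Acc (fun a b => Step b a) r

/-- The measure P on terms. -/
def Pm : Tm → ℕ
  | .var _ _ => 0
  | .lam _ _ r => Pm r
  | .app r _ => Pm r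
  | .pair r s => 1 + Pm r + Pm s
  | .proj _ r => Pm r
  | .tlam _ r => Pm r
  | .tapp r _ => Pm r

/-- The measure M on terms. -/
def Mm : Tm → ℕ
  | .var _ _ => 1
  | .lam _ _ r => 1 + Mm r + Pm r
  | .app r s => Mm r + Mm s + Pm r * Mm s
  | .pair r s => Mm r + Mm s
  | .proj _ r => 1 + Mm r + Pm r
  | .tlam _ r => 1 + Mm r + Pm r
  | .tapp r _ => 1 + Mm r + Pm r

/-! ### Auxiliary development: prime normal forms for types -/

theorem TyEquiv.ftv_eq {A B : Ty} (h : TyEquiv A B) : ftv A = ftv B := by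
  induction h with
  | comm A B => simp [ftv, Finset.union_comm]
  | assoc A B C => simp [ftv, Finset.union_assoc]
  | distArr A B C => ext y; simp [ftv]; tauto
  | curry A B C => simp [ftv, Finset.union_assoc]
  | allArr X A B hX =>
      ext y
      simp only [ftv, Finset.mem_union, Finset.mem_sdiff, Finset.mem_singleton]
      constructor
      · rintro ⟨h1 | h1, h2⟩
        · exact Or.inl h1
        · exact Or.inr ⟨h1, h2⟩
      · rintro (h1 | ⟨h1, h2⟩)
        · exact ⟨Or.inl h1, fun e => hX (e ▸ h1)⟩
        · exact ⟨Or.inr h1, h2⟩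
  | allConj X A B => simp [ftv, Finset.union_sdiff_distrib]
  | refl A => rfl
  | symm h ih => exact ih.symm
  | trans h1 h2 ih1 ih2 => exact ih1.trans ih2
  | congArr h1 h2 ih1 ih2 => simp [ftv, ih1, ih2]
  | congConj h1 h2 ih1 ih2 => simp [ftv, ih1, ih2]
  | congAll X h ih => simp [ftv, ih]

/-- Prime spines: a prime factor is a word of arguments/quantifiers ending in a variable. -/
inductive NP : Type
  | done : ℕ → NP
  | arg : NP → NP → NP
  | allq : ℕ → NP → NP

/-- Realization of a prime spine as a type. -/
def NP.toTy : NP → Ty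
  | .done Y => .var Y
  | .arg a r => .arr a.toTy r.toTy
  | .allq X r => .all X r.toTy

open NP (toTy)

/-- Prepend a list of arguments. -/
def arrs (l : List NP) (c : NP) : NP := l.foldr .arg c

/-- Prepend a list of arguments at the type level. -/
def tyArrs (l : List NP) (T : Ty) : Ty := l.foldr (fun a T => .arr (toTy a) T) T

/-- Split a spine into its leading arguments and its core. -/
def spine : NP → List NP × NP
  | .arg a r => ⟨a :: (spine r).1, (spine r).2⟩
  | c => ⟨[], c⟩

def hasX (X : ℕ) (a : NP) : Bool := decide (X ∈ ftv (toTy a))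

/-- Prepend a quantifier, moving it past the arguments not containing it. -/
def qcons (X : ℕ) (π : NP) : NP :=
  arrs ((spine π).1.filter (fun a => !hasX X a))
    (.allq X (arrs ((spine π).1.filter (hasX X)) (spine π).2))

/-- Normal form: list of prime factors. -/
def NF : Ty → List NP
  | .var Y => [.done Y]
  | .arr A B => (NF B).map (arrs (NF A))
  | .conj A B => NF A ++ NF B
  | .all X A => (NF A).map (qcons X)

/-- Equality of primes up to permutations of adjacent arguments. -/
inductive NPeq : NP → NP → Prop
  | rfl (π) : NPeq π π
  | symm {a b} : NPeq a b → NPeq b a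
  | trans {a b c} : NPeq a b → NPeq b c → NPeq a c
  | congArg {a a' r r'} : NPeq a a' → NPeq r r' → NPeq (.arg a r) (.arg a' r')
  | congAll (X) {r r'} : NPeq r r' → NPeq (.allq X r) (.allq X r')
  | swap (a b r) : NPeq (.arg a (.arg b r)) (.arg b (.arg a r))

instance : IsTrans NP NPeq := ⟨fun _ _ _ => .trans⟩

/-! #### basic spine lemmas -/

@[simp] lemma spine_done (Y) : spine (.done Y) = ⟨[], .done Y⟩ := rfl
@[simp] lemma spine_allq (X r) : spine (.allq X r) = ⟨[], .allq X r⟩ := rfl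
@[simp] lemma spine_arg (a r) : spine (.arg a r) = ⟨a :: (spine r).1, (spine r).2⟩ := rfl

lemma arrs_append (l₁ l₂ : List NP) (c : NP) :
    arrs (l₁ ++ l₂) c = arrs l₁ (arrs l₂ c) := List.foldr_append

@[simp] lemma arrs_cons (a : NP) (l : List NP) (c : NP) :
    arrs (a :: l) c = .arg a (arrs l c) := rfl

@[simp] lemma arrs_nil (c : NP) : arrs [] c = c := rfl

lemma tyArrs_append (l₁ l₂ : List NP) (T : Ty) :
    tyArrs (l₁ ++ l₂) T = tyArrs l₁ (tyArrs l₂ T) := List.foldr_append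

@[simp] lemma tyArrs_cons (a : NP) (l : List NP) (T : Ty) :
    tyArrs (a :: l) T = .arr (toTy a) (tyArrs l T) := rfl

@[simp] lemma tyArrs_nil (T : Ty) : tyArrs [] T = T := rfl

lemma spine_arrs (l : List NP) (c : NP) :
    spine (arrs l c) = ⟨l ++ (spine c).1, (spine c).2⟩ := by
  induction l with
  | nil => simp
  | cons a l ih => simp [ih]

lemma spine_eta (π : NP) : arrs (spine π).1 (spine π).2 = π := by
  induction π with
  | done Y => rfl
  | arg a r iha ihr => simp [ihr]
  | allq X r ih => rfl

lemma spine_core (π : NP) : ∀ a r, (spine π).2 ≠ .arg a r := by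
  induction π with
  | done Y => intro a r h; exact NP.noConfusion h
  | arg a r iha ihr => simpa using ihr
  | allq X r ih => intro a r h; exact NP.noConfusion h

lemma toTy_arrs (l : List NP) (c : NP) : toTy (arrs l c) = tyArrs l (toTy c) := by
  induction l with
  | nil => rfl
  | cons a l ih =>
      rw [arrs_cons]
      show Ty.arr (toTy a) (toTy (arrs l c)) = Ty.arr (toTy a) (tyArrs l (toTy c))
      rw [ih]

/-! #### NPeq lemmas -/

lemma mrel_refl (s : Multiset NP) : Multiset.Rel NPeq s s := by
  induction s using Multiset.induction_on with
  | empty => exact Multiset.Rel.zero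
  | cons a s ih => exact Multiset.Rel.cons (NPeq.rfl a) ih

lemma mrel_of_perm {l l' : List NP} (h : l.Perm l') :
    Multiset.Rel NPeq ↑l ↑l' := by
  rw [show (↑l : Multiset NP) = ↑l' from Quot.sound h]
  exact mrel_refl _

lemma mrel_symm {s t : Multiset NP} (h : Multiset.Rel NPeq s t) :
    Multiset.Rel NPeq t s := by
  induction h with
  | zero => exact Multiset.Rel.zero
  | cons h _ ih => exact Multiset.Rel.cons h.symm ih

lemma mrel_of_forall₂ {l l' : List NP} (h : List.Forall₂ NPeq l l') :
    Multiset.Rel NPeq ↑l ↑l' := by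
  induction h with
  | nil => exact Multiset.Rel.zero
  | cons h _ ih => rw [← Multiset.cons_coe, ← Multiset.cons_coe]; exact Multiset.Rel.cons h ih

lemma mrel_exists {α β : Type*} {r : α → β → Prop} {s : Multiset α} {t : Multiset β}
    (h : Multiset.Rel r s t) :
    ∃ (l₁ : List α) (l₂ : List β), List.Forall₂ r l₁ l₂ ∧ s = ↑l₁ ∧ t = ↑l₂ := by
  induction h with
  | zero => exact ⟨[], [], List.Forall₂.nil, rfl, rfl⟩
  | cons h _ ih =>
      obtain ⟨l₁, l₂, hf, rfl, rfl⟩ := ih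
      exact ⟨_ :: l₁, _ :: l₂, List.Forall₂.cons h hf,
        (Multiset.cons_coe _ _).symm, (Multiset.cons_coe _ _).symm⟩

lemma mrel_mem_right {s t : Multiset NP} (h : Multiset.Rel NPeq s t) {b : NP}
    (hb : b ∈ t) : ∃ a ∈ s, NPeq a b := by
  induction h with
  | zero => simp at hb
  | cons h hst ih =>
      rcases Multiset.mem_cons.mp hb with rfl | hb
      · exact ⟨_, Multiset.mem_cons_self _ _, h⟩
      · obtain ⟨a, ha, hab⟩ := ih hb
        exact ⟨a, Multiset.mem_cons_of_mem ha, hab⟩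

lemma NPeq.ftv_eq {a b : NP} (h : NPeq a b) : ftv (toTy a) = ftv (toTy b) := by
  induction h with
  | rfl π => rfl
  | symm _ ih => exact ih.symm
  | trans _ _ ih1 ih2 => exact ih1.trans ih2
  | congArg _ _ ih1 ih2 => simp [toTy, ftv, ih1, ih2]
  | congAll X _ ih => simp [toTy, ftv, ih]
  | swap a b r =>
      simp only [toTy, ftv, ← Finset.union_assoc]
      rw [Finset.union_comm (ftv (toTy a)) (ftv (toTy b))]

lemma arr_swap (A B T : Ty) : TyEquiv (.arr A (.arr B T)) (.arr B (.arr A T)) :=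
  ((TyEquiv.curry A B T).symm.trans
    (TyEquiv.congArr (TyEquiv.comm A B) (TyEquiv.refl T))).trans (TyEquiv.curry B A T)

lemma NPeq.equiv {a b : NP} (h : NPeq a b) : TyEquiv (toTy a) (toTy b) := by
  induction h with
  | rfl π => exact TyEquiv.refl _
  | symm _ ih => exact ih.symm
  | trans _ _ ih1 ih2 => exact ih1.trans ih2
  | congArg _ _ ih1 ih2 => exact TyEquiv.congArr ih1 ih2
  | congAll X _ ih => exact TyEquiv.congAll X ih
  | swap a b r => exact arr_swap _ _ _

lemma npeq_arrs_perm {l l' : List NP} (h : l.Perm l') (c : NP) :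
    NPeq (arrs l c) (arrs l' c) := by
  induction h with
  | nil => exact NPeq.rfl _
  | cons x _ ih => exact NPeq.congArg (NPeq.rfl x) ih
  | swap x y l => exact NPeq.swap y x (arrs l c)
  | trans _ _ ih1 ih2 => exact ih1.trans ih2

lemma npeq_arrs_forall₂ {l l' : List NP} (h : List.Forall₂ NPeq l l') {c c' : NP}
    (hc : NPeq c c') : NPeq (arrs l c) (arrs l' c') := by
  induction h with
  | nil => exact hc
  | cons h _ ih => exact NPeq.congArg h ih

lemma npeq_arrs {l l' : List NP} (h : Multiset.Rel NPeq ↑l ↑l') {c c' : NP}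
    (hc : NPeq c c') : NPeq (arrs l c) (arrs l' c') := by
  obtain ⟨l₁, l₂, hf, h1, h2⟩ := mrel_exists h
  rw [Multiset.coe_eq_coe] at h1 h2
  exact ((npeq_arrs_perm h1 c).trans (npeq_arrs_forall₂ hf hc)).trans
    (npeq_arrs_perm h2.symm c')

/-- Cores agree after NPeq. -/
def CoreEq (c c' : NP) : Prop :=
  (∃ Y, c = .done Y ∧ c' = .done Y) ∨
  (∃ X r r', c = .allq X r ∧ c' = .allq X r' ∧ NPeq r r')

lemma coreEq_refl (π : NP) (h : ∀ a r, π ≠ NP.arg a r) : CoreEq π π := by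
  cases π with
  | done Y => exact Or.inl ⟨Y, rfl, rfl⟩
  | arg a r => exact absurd rfl (h a r)
  | allq X r => exact Or.inr ⟨X, r, r, rfl, rfl, NPeq.rfl r⟩

lemma coreEq_symm {c c'} (h : CoreEq c c') : CoreEq c' c := by
  rcases h with ⟨Y, rfl, rfl⟩ | ⟨X, r, r', rfl, rfl, hr⟩
  · exact Or.inl ⟨Y, rfl, rfl⟩
  · exact Or.inr ⟨X, r', r, rfl, rfl, hr.symm⟩

lemma coreEq_trans {c c' c''} (h : CoreEq c c') (h' : CoreEq c' c'') : CoreEq c c'' := by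
  rcases h with ⟨Y, rfl, rfl⟩ | ⟨X, r, r', rfl, rfl, hr⟩
  · rcases h' with ⟨Y', e1, e2⟩ | ⟨X', s, s', e1, e2, hs⟩
    · injection e1 with e; subst e; exact Or.inl ⟨Y, rfl, e2⟩
    · exact absurd e1 (by intro h; exact NP.noConfusion h)
  · rcases h' with ⟨Y', e1, e2⟩ | ⟨X', s, s', e1, e2, hs⟩
    · exact absurd e1 (by intro h; exact NP.noConfusion h)
    · injection e1 with eX er; subst eX; subst er
      exact Or.inr ⟨X, r, s', rfl, e2, hr.trans hs⟩

/-- Key structure lemma: NPeq preserves the spine decomposition. -/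
lemma NPeq.spine_rel {π π' : NP} (h : NPeq π π') :
    Multiset.Rel NPeq ↑(spine π).1 ↑(spine π').1 ∧ CoreEq (spine π).2 (spine π').2 := by
  induction h with
  | rfl π => exact ⟨mrel_refl _, coreEq_refl _ (spine_core π)⟩
  | symm _ ih => exact ⟨mrel_symm ih.1, coreEq_symm ih.2⟩
  | trans _ _ ih1 ih2 =>
      exact ⟨Multiset.Rel.trans _ ih1.1 ih2.1, coreEq_trans ih1.2 ih2.2⟩
  | @congArg a a' r r' ha hr iha ihr =>
      refine ⟨?_, ihr.2⟩
      simp only [spine_arg, ← Multiset.cons_coe]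
      exact Multiset.Rel.cons ha ihr.1
  | @congAll X r r' h ih =>
      exact ⟨Multiset.Rel.zero, Or.inr ⟨X, r, r', Eq.refl _, Eq.refl _, h⟩⟩
  | swap a b r =>
      refine ⟨mrel_of_perm ?_, coreEq_refl _ (spine_core r)⟩
      simp only [spine_arg]
      exact List.Perm.swap _ _ _

lemma forall₂_filter (p : NP → Bool) (hp : ∀ a b, NPeq a b → p a = p b)
    {l l' : List NP} (h : List.Forall₂ NPeq l l') :
    List.Forall₂ NPeq (l.filter p) (l'.filter p) := by
  induction h with
  | nil => simp
  | @cons a b l l' hab _ ih =>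
      by_cases hpa : p a
      · rw [List.filter_cons_of_pos hpa, List.filter_cons_of_pos (by rw [← hp a b hab]; exact hpa)]
        exact List.Forall₂.cons hab ih
      · rw [List.filter_cons_of_neg hpa,
          List.filter_cons_of_neg (by rw [← hp a b hab]; exact hpa)]
        exact ih

lemma mrel_filter (p : NP → Bool) (hp : ∀ a b, NPeq a b → p a = p b)
    {l l' : List NP} (h : Multiset.Rel NPeq ↑l ↑l') :
    Multiset.Rel NPeq ↑(l.filter p) ↑(l'.filter p) := by
  obtain ⟨l₁, l₂, hf, h1, h2⟩ := mrel_exists h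
  rw [Multiset.coe_eq_coe] at h1 h2
  exact ((mrel_of_perm (h1.filter p)).trans _
    (mrel_of_forall₂ (forall₂_filter p hp hf))).trans _
    (mrel_of_perm (h2.filter p).symm)

lemma hasX_congr (X : ℕ) : ∀ a b, NPeq a b → hasX X a = hasX X b := by
  intro a b h; simp [hasX, h.ftv_eq]

lemma coreEq_npeq {c c'} (h : CoreEq c c') : NPeq c c' := by
  rcases h with ⟨Y, rfl, rfl⟩ | ⟨X, r, r', rfl, rfl, hr⟩
  · exact NPeq.rfl _
  · exact NPeq.congAll X hr

lemma NPeq.qcons (X : ℕ) {π π' : NP} (h : NPeq π π') :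
    NPeq (qcons X π) (qcons X π') := by
  obtain ⟨h1, h2⟩ := h.spine_rel
  unfold _root_.qcons
  exact npeq_arrs (mrel_filter _ (by intro a b h; simp [hasX_congr X a b h]) h1)
    (NPeq.congAll X (npeq_arrs (mrel_filter _ (hasX_congr X) h1) (coreEq_npeq h2)))

/-! #### conjList lemmas -/

lemma conjList_cons (A : Ty) {l : List Ty} (h : l ≠ []) :
    conjList (A :: l) = .conj A (conjList l) := by
  cases l with
  | nil => exact absurd rfl h
  | cons B l => rfl

lemma conj_perm {l l' : List Ty} (h : l.Perm l') :
    TyEquiv (conjList l) (conjList l') := by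
  induction h with
  | nil => exact TyEquiv.refl _
  | @cons x l₁ l₂ p ih =>
      rcases List.eq_nil_or_concat l₁ with rfl | _
      · rw [p.nil_eq]; exact TyEquiv.refl _
      · have h₁ : l₁ ≠ [] := by rintro rfl; simp_all
        have h₂ : l₂ ≠ [] := by rintro rfl; exact h₁ p.eq_nil
        rw [conjList_cons x h₁, conjList_cons x h₂]
        exact TyEquiv.congConj (TyEquiv.refl x) ih
  | swap x y l =>
      cases l with
      | nil => exact TyEquiv.comm y x
      | cons z l =>
          show TyEquiv (.conj y (.conj x _)) (.conj x (.conj y _))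
          exact ((TyEquiv.assoc y x _).trans
            (TyEquiv.congConj (TyEquiv.comm y x) (TyEquiv.refl _))).trans
            (TyEquiv.assoc x y _).symm
  | trans _ _ ih1 ih2 => exact ih1.trans ih2

lemma conj_append {l₁ l₂ : List Ty} (h₁ : l₁ ≠ []) (h₂ : l₂ ≠ []) :
    TyEquiv (conjList (l₁ ++ l₂)) (.conj (conjList l₁) (conjList l₂)) := by
  induction l₁ with
  | nil => exact absurd rfl h₁
  | cons a l₁ ih =>
      cases l₁ with
      | nil => rw [List.singleton_append, conjList_cons a h₂]; exact TyEquiv.refl _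
      | cons b l₁ =>
          rw [List.cons_append, conjList_cons a (by simp), conjList_cons a (by simp)]
          exact (TyEquiv.congConj (TyEquiv.refl a) (ih (by simp))).trans
            (TyEquiv.assoc a _ _)

lemma conj_congr {l l' : List Ty} (h : List.Forall₂ TyEquiv l l') :
    TyEquiv (conjList l) (conjList l') := by
  induction h with
  | nil => exact TyEquiv.refl _
  | @cons a b l l' hab hf ih =>
      cases hf with
      | nil => exact hab
      | cons h2 h3 =>
          rw [conjList_cons a (by simp), conjList_cons b (by simp)]
          exact TyEquiv.congConj hab ih

lemma conj_map_arr_cons (A a : Ty) (l : List Ty) :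
    TyEquiv (.arr A (conjList (a :: l))) (conjList ((a :: l).map (.arr A ·))) := by
  induction l generalizing a with
  | nil => exact TyEquiv.refl _
  | cons b l ih =>
      show TyEquiv (.arr A (.conj a (conjList (b :: l))))
        (.conj (.arr A a) (conjList ((b :: l).map (.arr A ·))))
      exact (TyEquiv.distArr A a _).trans
        (TyEquiv.congConj (TyEquiv.refl _) (ih b))

lemma conj_map_arr (A : Ty) {l : List Ty} (h : l ≠ []) :
    TyEquiv (.arr A (conjList l)) (conjList (l.map (.arr A ·))) := by
  cases l with
  | nil => exact absurd rfl h
  | cons a l => exact conj_map_arr_cons A a l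

lemma conj_map_all_cons (X : ℕ) (a : Ty) (l : List Ty) :
    TyEquiv (.all X (conjList (a :: l))) (conjList ((a :: l).map (.all X ·))) := by
  induction l generalizing a with
  | nil => exact TyEquiv.refl _
  | cons b l ih =>
      show TyEquiv (.all X (.conj a (conjList (b :: l))))
        (.conj (.all X a) (conjList ((b :: l).map (.all X ·))))
      exact (TyEquiv.allConj X a _).trans
        (TyEquiv.congConj (TyEquiv.refl _) (ih b))

lemma conj_map_all (X : ℕ) {l : List Ty} (h : l ≠ []) :
    TyEquiv (.all X (conjList l)) (conjList (l.map (.all X ·))) := by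
  cases l with
  | nil => exact absurd rfl h
  | cons a l => exact conj_map_all_cons X a l

lemma ftv_conjList {B : Ty} : ∀ {l : List Ty}, B ∈ l → ftv B ⊆ ftv (conjList l) := by
  intro l h
  induction l with
  | nil => simp at h
  | cons a l ih =>
      cases l with
      | nil =>
          rw [List.mem_singleton] at h
          subst h
          exact Finset.Subset.refl _
      | cons b l =>
          rcases List.mem_cons.mp h with rfl | h
          · show ftv B ⊆ ftv (.conj B (conjList (b :: l)))
            exact Finset.subset_union_left
          · refine (ih h).trans ?_
            show ftv (conjList (b :: l)) ⊆ ftv (.conj a (conjList (b :: l)))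
            exact Finset.subset_union_right

/-! #### tyArrs equivalence lemmas -/

lemma tyArrs_perm {l l' : List NP} (h : l.Perm l') (T : Ty) :
    TyEquiv (tyArrs l T) (tyArrs l' T) := by
  induction h with
  | nil => exact TyEquiv.refl _
  | cons x _ ih => exact TyEquiv.congArr (TyEquiv.refl _) ih
  | swap x y l => exact arr_swap (toTy y) (toTy x) (tyArrs l T)
  | trans _ _ ih1 ih2 => exact ih1.trans ih2

lemma tyArrs_congr {l l' : List NP} (h : List.Forall₂ NPeq l l') {T T' : Ty}
    (hT : TyEquiv T T') : TyEquiv (tyArrs l T) (tyArrs l' T') := by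
  induction h with
  | nil => exact hT
  | cons hab _ ih => exact TyEquiv.congArr hab.equiv ih

lemma tyArrs_mrel {l l' : List NP} (h : Multiset.Rel NPeq ↑l ↑l') {T T' : Ty}
    (hT : TyEquiv T T') : TyEquiv (tyArrs l T) (tyArrs l' T') := by
  obtain ⟨l₁, l₂, hf, h1, h2⟩ := mrel_exists h
  rw [Multiset.coe_eq_coe] at h1 h2
  exact ((tyArrs_perm h1 T).trans (tyArrs_congr hf hT)).trans (tyArrs_perm h2.symm T')

lemma tyArrs_conj {l : List NP} (h : l ≠ []) (T : Ty) :
    TyEquiv (tyArrs l T) (.arr (conjList (l.map toTy)) T) := by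
  induction l with
  | nil => exact absurd rfl h
  | cons a l ih =>
      cases l with
      | nil => exact TyEquiv.refl _
      | cons b l =>
          rw [tyArrs_cons, List.map_cons, conjList_cons _ (by simp)]
          exact (TyEquiv.congArr (TyEquiv.refl _) (ih (by simp))).trans
            (TyEquiv.curry _ _ _).symm

lemma tyArrs_all (X : ℕ) {l : List NP} (hl : ∀ a ∈ l, X ∉ ftv (toTy a)) (T : Ty) :
    TyEquiv (.all X (tyArrs l T)) (tyArrs l (.all X T)) := by
  induction l with
  | nil => exact TyEquiv.refl _
  | cons a l ih =>
      exact (TyEquiv.allArr X _ _ (hl a (by simp))).trans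
        (TyEquiv.congArr (TyEquiv.refl _) (ih (fun b hb => hl b (by simp [hb]))))

/-! #### soundness of NF -/

lemma NF_ne_nil (A : Ty) : NF A ≠ [] := by
  induction A with
  | var Y => simp [NF]
  | arr A B ihA ihB => simp [NF, ihB]
  | conj A B ihA ihB => simp [NF, ihA]
  | all X A ih => simp [NF, ih]

lemma forall₂_map_self {l : List NP} {f g : NP → Ty}
    (h : ∀ x ∈ l, TyEquiv (f x) (g x)) : List.Forall₂ TyEquiv (l.map f) (l.map g) := by
  induction l with
  | nil => simp
  | cons a l ih =>
      simp only [List.map_cons]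
      exact List.Forall₂.cons (h a (by simp)) (ih (fun x hx => h x (by simp [hx])))

lemma qcons_equiv (X : ℕ) (π : NP) : TyEquiv (.all X (toTy π)) (toTy (qcons X π)) := by
  have hperm : ((spine π).1.filter (fun a => !hasX X a) ++
      (spine π).1.filter (hasX X)).Perm (spine π).1 := by
    simpa [Bool.not_not] using
      List.filter_append_perm (fun a => !hasX X a) (spine π).1
  have e1 : toTy π = tyArrs (spine π).1 (toTy (spine π).2) := by
    conv_lhs => rw [← spine_eta π]
    exact toTy_arrs _ _
  unfold qcons
  rw [toTy_arrs]
  show TyEquiv _ (tyArrs _ (toTy (NP.allq X _)))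
  rw [show toTy (NP.allq X (arrs ((spine π).1.filter (hasX X)) (spine π).2)) =
    .all X (tyArrs ((spine π).1.filter (hasX X)) (toTy (spine π).2)) by
      simp [toTy, toTy_arrs]]
  refine TyEquiv.trans ?_ (tyArrs_all X ?_ _)
  · rw [e1, ← tyArrs_append]
    exact TyEquiv.congAll X (tyArrs_perm hperm.symm _)
  · intro a ha
    have := List.of_mem_filter ha
    simpa [hasX] using this

theorem nf_sound (A : Ty) : TyEquiv A (conjList ((NF A).map toTy)) := by
  induction A with
  | var Y => exact TyEquiv.refl _
  | arr A B ihA ihB =>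
      refine (TyEquiv.congArr (TyEquiv.refl A) ihB).trans ?_
      refine (conj_map_arr A (by simp [NF_ne_nil])).trans ?_
      rw [NF, List.map_map, List.map_map]
      refine conj_congr (forall₂_map_self ?_)
      intro π _
      show TyEquiv (.arr A (toTy π)) (toTy (arrs (NF A) π))
      rw [toTy_arrs]
      exact (TyEquiv.congArr (ihA.trans (TyEquiv.refl _)) (TyEquiv.refl _)).trans
        (tyArrs_conj (NF_ne_nil A) (toTy π)).symm
  | conj A B ihA ihB =>
      refine (TyEquiv.congConj ihA ihB).trans ?_
      rw [NF, List.map_append]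
      exact (conj_append (by simp [NF_ne_nil]) (by simp [NF_ne_nil])).symm
  | all X A ih =>
      refine (TyEquiv.congAll X ih).trans ?_
      refine (conj_map_all X (by simp [NF_ne_nil])).trans ?_
      rw [NF, List.map_map, List.map_map]
      refine conj_congr (forall₂_map_self ?_)
      intro π _
      exact qcons_equiv X π

lemma nf_ftv {A : Ty} {π : NP} (h : π ∈ NF A) : ftv (toTy π) ⊆ ftv A := by
  rw [(nf_sound A).ftv_eq]
  exact ftv_conjList (List.mem_map_of_mem (f := toTy) h)

lemma qcons_arrs {X : ℕ} {bs : List NP} (hall : ∀ a ∈ bs, X ∉ ftv (toTy a)) (π : NP) :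
    qcons X (arrs bs π) = arrs bs (qcons X π) := by
  have hb1 : bs.filter (fun a => !hasX X a) = bs :=
    List.filter_eq_self.mpr (by intro a ha; simpa [hasX] using hall a ha)
  have hb2 : bs.filter (hasX X) = [] :=
    List.filter_eq_nil_iff.mpr (by intro a ha; simpa [hasX] using hall a ha)
  unfold qcons
  rw [spine_arrs, List.filter_append, List.filter_append, hb1, hb2,
    List.nil_append, arrs_append]

theorem nf_equiv {A B : Ty} (h : TyEquiv A B) :
    Multiset.Rel NPeq ↑(NF A) ↑(NF B) := by
  induction h with
  | comm A B => exact mrel_of_perm List.perm_append_comm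
  | assoc A B C =>
      apply mrel_of_perm
      show (NF A ++ (NF B ++ NF C)).Perm ((NF A ++ NF B) ++ NF C)
      rw [List.append_assoc]
  | distArr A B C =>
      apply mrel_of_perm
      show ((NF B ++ NF C).map (arrs (NF A))).Perm
        ((NF B).map (arrs (NF A)) ++ (NF C).map (arrs (NF A)))
      rw [List.map_append]
  | curry A B C =>
      apply mrel_of_perm
      show ((NF C).map (arrs (NF A ++ NF B))).Perm
        (((NF C).map (arrs (NF B))).map (arrs (NF A)))
      rw [List.map_map]
      apply List.Perm.of_eq
      apply List.map_congr_left
      intro π _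
      exact arrs_append _ _ _
  | allArr X A B hX =>
      apply mrel_of_perm
      show (((NF B).map (arrs (NF A))).map (qcons X)).Perm
        (((NF B).map (qcons X)).map (arrs (NF A)))
      rw [List.map_map, List.map_map]
      apply List.Perm.of_eq
      apply List.map_congr_left
      intro π _
      exact qcons_arrs (fun a ha hmem => hX (nf_ftv ha hmem)) π
  | allConj X A B =>
      apply mrel_of_perm
      show ((NF A ++ NF B).map (qcons X)).Perm
        ((NF A).map (qcons X) ++ (NF B).map (qcons X))
      rw [List.map_append]
  | refl A => exact mrel_refl _
  | symm _ ih => exact mrel_symm ih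
  | trans _ _ ih1 ih2 => exact Multiset.Rel.trans _ ih1 ih2
  | @congArr A A' B B' _ _ ihA ihB =>
      show Multiset.Rel NPeq ↑((NF B).map (arrs (NF A))) ↑((NF B').map (arrs (NF A')))
      rw [show ((NF B).map (arrs (NF A)) : Multiset NP) =
        Multiset.map (arrs (NF A)) ↑(NF B) from rfl,
        show ((NF B').map (arrs (NF A')) : Multiset NP) =
        Multiset.map (arrs (NF A')) ↑(NF B') from rfl]
      exact Multiset.rel_map.mpr (ihB.mono (fun π _ π' _ hr => npeq_arrs ihA hr))
  | congConj _ _ ih1 ih2 =>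
      show Multiset.Rel NPeq ↑(NF _ ++ NF _) ↑(NF _ ++ NF _)
      rw [← Multiset.coe_add, ← Multiset.coe_add]
      exact Multiset.Rel.add ih1 ih2
  | @congAll X A B _ ih =>
      show Multiset.Rel NPeq ↑((NF A).map (qcons X)) ↑((NF B).map (qcons X))
      rw [show ((NF A).map (qcons X) : Multiset NP) =
        Multiset.map (qcons X) ↑(NF A) from rfl,
        show ((NF B).map (qcons X) : Multiset NP) =
        Multiset.map (qcons X) ↑(NF B) from rfl]
      exact Multiset.rel_map.mpr (ih.mono (fun π _ π' _ hr => hr.qcons X))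

/-! #### extraction -/

lemma pair_extract {X : ℕ} {B : Ty} {α γ : NP}
    (hR : NPeq (qcons X α) (arrs (NF B) γ)) :
    ∃ C'', TyEquiv (toTy γ) (.all X C'') ∧ TyEquiv (toTy α) (.arr B C'') := by
  obtain ⟨H1, H2⟩ := hR.spine_rel
  rw [show qcons X α = arrs ((spine α).1.filter (fun a => !hasX X a))
      (.allq X (arrs ((spine α).1.filter (hasX X)) (spine α).2)) from rfl,
    spine_arrs, spine_arrs] at H1 H2
  simp only [spine_allq, List.append_nil] at H1 H2
  rcases H2 with ⟨Y, hY, _⟩ | ⟨X', r, r', h1, h2, hr⟩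
  · exact absurd hY (by intro h; exact NP.noConfusion h)
  injection h1 with eX er
  subst eX
  subst er
  refine ⟨tyArrs (spine γ).1 (toTy r'), ?_, ?_⟩
  · -- toTy γ ≡ all X C''
    have hfree : ∀ a ∈ (spine γ).1, X ∉ ftv (toTy a) := by
      intro a ha
      obtain ⟨b, hb, hba⟩ := mrel_mem_right H1
        (by rw [Multiset.mem_coe]; exact List.mem_append_right _ ha)
      rw [← hba.ftv_eq]
      have := List.of_mem_filter (Multiset.mem_coe.mp hb)
      simpa [hasX] using this
    have e1 : toTy γ = tyArrs (spine γ).1 (.all X (toTy r')) := by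
      conv_lhs => rw [← spine_eta γ]
      rw [toTy_arrs, h2]
      rfl
    rw [e1]
    exact (tyArrs_all X hfree (toTy r')).symm
  · -- toTy α ≡ arr B C''
    have hperm : ((spine α).1.filter (fun a => !hasX X a) ++
        (spine α).1.filter (hasX X)).Perm (spine α).1 := by
      simpa [Bool.not_not] using
        List.filter_append_perm (fun a => !hasX X a) (spine α).1
    have e1 : toTy α = tyArrs (spine α).1 (toTy (spine α).2) := by
      conv_lhs => rw [← spine_eta α]
      exact toTy_arrs _ _
    rw [e1]
    refine (tyArrs_perm hperm.symm _).trans ?_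
    rw [tyArrs_append]
    have inner : TyEquiv (tyArrs ((spine α).1.filter (hasX X)) (toTy (spine α).2))
        (toTy r') := by
      rw [← toTy_arrs]
      exact hr.equiv
    refine (tyArrs_mrel H1 inner).trans ?_
    rw [tyArrs_append]
    refine (tyArrs_conj (NF_ne_nil B) _).trans ?_
    exact TyEquiv.congArr (nf_sound B).symm (TyEquiv.refl _)

lemma forall₂_map₂ {α β : Type*} {r : α → β → Prop} {l : List α} {l' : List β}
    {f : α → Ty} {g : β → Ty} (h : List.Forall₂ r l l')
    (hp : ∀ a b, r a b → TyEquiv (f a) (g b)) :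
    List.Forall₂ TyEquiv (l.map f) (l'.map g) := by
  induction h with
  | nil => simp
  | cons hab _ ih => exact List.Forall₂.cons (hp _ _ hab) ih

lemma list_extract {X : ℕ} {B : Ty} :
    ∀ {lA lC : List NP},
      List.Forall₂ (fun a c => NPeq (qcons X a) (arrs (NF B) c)) lA lC →
      ∃ lC' : List Ty, lC'.length = lC.length ∧
        List.Forall₂ (fun γ C'' => TyEquiv (toTy γ) (.all X C'')) lC lC' ∧
        List.Forall₂ (fun α C'' => TyEquiv (toTy α) (.arr B C'')) lA lC' := by
  intro lA lC h
  induction h with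
  | nil => exact ⟨[], rfl, List.Forall₂.nil, List.Forall₂.nil⟩
  | @cons a c lA lC hac _ ih =>
      obtain ⟨lC', hlen, h1, h2⟩ := ih
      obtain ⟨C'', hC1, hC2⟩ := pair_extract hac
      exact ⟨C'' :: lC', by simp [hlen], List.Forall₂.cons hC1 h1,
        List.Forall₂.cons hC2 h2⟩
/-- If ∀X.A ≡ B ⇒ C then C ≡ ∀X.C' and A ≡ B ⇒ C' for some C'. -/
theorem equiv_all_arr (X : ℕ) (A B C : Ty) (h : TyEquiv (.all X A) (.arr B C)) :
    ∃ C', TyEquiv C (.all X C') ∧ TyEquiv A (.arr B C') := by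
  have H := nf_equiv h
  rw [show (↑(NF (.all X A)) : Multiset NP) = Multiset.map (qcons X) ↑(NF A) from rfl,
    show (↑(NF (.arr B C)) : Multiset NP) = Multiset.map (arrs (NF B)) ↑(NF C) from rfl]
    at H
  have H2 := Multiset.rel_map.mp H
  obtain ⟨lA, lC, hf, hA, hC⟩ := mrel_exists H2
  rw [Multiset.coe_eq_coe] at hA hC
  obtain ⟨lC', hlen, h1, h2⟩ := list_extract hf
  have hlCne : lC ≠ [] := by
    intro e
    apply NF_ne_nil C
    have := hC.length_eq
    rw [e] at this
    exact List.length_eq_zero_iff.mp this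
  have hlC'ne : lC' ≠ [] := by
    intro e
    rw [e] at hlen
    exact hlCne (List.length_eq_zero_iff.mp hlen.symm)
  refine ⟨conjList lC', ?_, ?_⟩
  · refine (nf_sound C).trans ?_
    refine (conj_perm (hC.map toTy)).trans ?_
    refine (conj_congr (forall₂_map₂ h1 (fun a b hab => ?_))).trans
      (conj_map_all X hlC'ne).symm
    · exact (by simpa using hab : TyEquiv (toTy a) (.all X (id b)))
  · refine (nf_sound A).trans ?_
    refine (conj_perm (hA.map toTy)).trans ?_
    refine (conj_congr (forall₂_map₂ h2 (fun a b hab => ?_))).trans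
      (conj_map_arr B hlC'ne).symm
    · exact (by simpa using hab : TyEquiv (toTy a) (.arr B (id b)))
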